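/- arXiv:math/0003017 — 2 statements merged into one kernel-verified Lean document; each statement's English description precedes it below -/
import Mathlib

section
/- Let N = 2M+1 be odd and q = e^{2πi/N}. Then ∑_{j=0}^{N-1} q^{j²} = q^{L²} · ∏_{j=1}^{M}(1 - q^j), where L is an integer with 2L ≡ M (mod N). -/
/-!
Gauss's argument via Gaussian binomial coefficients. The alternating sums
`A n = ∑ₖ (-1)ᵏ [n, k]_q` satisfy `A (n + 2) = (1 - q ^ (n + 1)) * A n`, so
`A (2m) = ∏_{k < m} (1 - q ^ (2k + 1))`. At a primitive `(n + 1)`-st root of unity `ρ`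
the `q`-Pascal rules force `[n, k]_ρ = (-1)ᵏ ρ ^ (-k(k+1)/2)`. Taking `ρ = ζ ^ M`, which is
again primitive of order `N = 2M + 1`, the product `∏_{j=1}^{M} (1 - ζ ^ j)` becomes
`∑ₖ ζ ^ (-M k(k+1)/2)`. Since `M + 1 = 1/2` and `L = -(M + 1)²` in `ZMod N`, completing the
square gives `L² - M k(k+1)/2 = ((M + 1)(k + M + 1))²`, and `k ↦ (M + 1)(k + M + 1)` permutes
`ZMod N`.
-/

open Finset

section QBinomial

variable {R : Type*} [CommRing R]

def qBinomial (q : R) : ℕ → ℕ → R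
  | _, 0 => 1
  | 0, _ + 1 => 0
  | n + 1, k + 1 => qBinomial q n k + q ^ (k + 1) * qBinomial q n (k + 1)

variable (q : R)

@[simp]
theorem qBinomial_zero_right (n : ℕ) : qBinomial q n 0 = 1 := by cases n <;> rfl

theorem qBinomial_succ_succ (n k : ℕ) :
    qBinomial q (n + 1) (k + 1) = qBinomial q n k + q ^ (k + 1) * qBinomial q n (k + 1) := rfl

theorem qBinomial_eq_zero_of_lt {n k : ℕ} (h : n < k) : qBinomial q n k = 0 := by
  induction n generalizing k with
  | zero => obtain ⟨k, rfl⟩ := Nat.exists_eq_succ_of_ne_zero h.ne'; rfl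
  | succ n ih =>
    obtain ⟨k, rfl⟩ := Nat.exists_eq_succ_of_ne_zero (Nat.ne_zero_of_lt h)
    rw [qBinomial_succ_succ, ih (by omega), ih (by omega), mul_zero, add_zero]

/-- The second `q`-Pascal rule in disguise, indexed by `n + k` to avoid truncated subtraction. -/
theorem one_sub_pow_mul_qBinomial (n k : ℕ) :
    (1 - q ^ n) * qBinomial q (n + k) k = (1 - q ^ (k + 1)) * qBinomial q (n + k) (k + 1) := by
  induction n generalizing k with
  | zero => simp [qBinomial_eq_zero_of_lt q (Nat.lt_succ_self k)]
  | succ n ih =>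
    induction k with
    | zero =>
      have := ih 0
      simp only [add_zero, qBinomial_zero_right, mul_one, zero_add] at this ⊢
      rw [qBinomial_succ_succ, qBinomial_zero_right]
      linear_combination q * this
    | succ k ihk =>
      have h := ih (k + 1)
      rw [Nat.add_right_comm] at ihk
      rw [← add_assoc] at h
      rw [← add_assoc, qBinomial_succ_succ q (n + 1 + k) k,
        qBinomial_succ_succ q (n + 1 + k) (k + 1), Nat.add_right_comm]
      linear_combination ihk + q ^ (k + 2) * h

theorem qBinomial_succ_succ' {n k : ℕ} (h : k ≤ n) :
    qBinomial q (n + 1) (k + 1) = q ^ (n - k) * qBinomial q n k + qBinomial q n (k + 1) := by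
  have E := one_sub_pow_mul_qBinomial q (n - k) k
  rw [Nat.sub_add_cancel h] at E
  rw [qBinomial_succ_succ]
  linear_combination E

def qBinomialSum (x : R) (n : ℕ) : R := ∑ k ∈ range (n + 1), x ^ k * qBinomial q n k

theorem sum_pow_succ_mul_qBinomial_succ (x : R) (n : ℕ) :
    ∑ k ∈ range (n + 1), x ^ (k + 1) * qBinomial q n (k + 1) = qBinomialSum q x n - 1 := by
  rw [qBinomialSum, sum_range_succ (fun k ↦ x ^ (k + 1) * qBinomial q n (k + 1)),
    sum_range_succ' (fun k ↦ x ^ k * qBinomial q n k), qBinomial_eq_zero_of_lt q n.lt_succ_self]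
  simp

theorem qBinomialSum_succ (x : R) (n : ℕ) :
    qBinomialSum q x (n + 1) = x * qBinomialSum q x n + qBinomialSum q (q * x) n := by
  have hshift := sum_pow_succ_mul_qBinomial_succ q (q * x) n
  have hterm : ∀ k ∈ range (n + 1), x ^ (k + 1) * qBinomial q (n + 1) (k + 1) =
      x * (x ^ k * qBinomial q n k) + (q * x) ^ (k + 1) * qBinomial q n (k + 1) := by
    intro k _
    rw [qBinomial_succ_succ]
    ring
  rw [qBinomialSum, sum_range_succ', sum_congr rfl hterm, sum_add_distrib, ← mul_sum, hshift]
  simp only [qBinomialSum, pow_zero, one_mul, qBinomial_zero_right]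
  ring

theorem qBinomialSum_neg_self_succ (n : ℕ) :
    qBinomialSum q (-q) (n + 1) = qBinomialSum q (-q) n - q ^ (n + 1) * qBinomialSum q (-1) n := by
  have hshift := sum_pow_succ_mul_qBinomial_succ q (-q) n
  have hterm : ∀ k ∈ range (n + 1), (-q) ^ (k + 1) * qBinomial q (n + 1) (k + 1) =
      -q ^ (n + 1) * ((-1) ^ k * qBinomial q n k) + (-q) ^ (k + 1) * qBinomial q n (k + 1) := by
    intro k hk
    have hq : q ^ (k + 1) * q ^ (n - k) = q ^ (n + 1) := by
      rw [← pow_add]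
      congr 1
      have := mem_range.mp hk
      omega
    rw [qBinomial_succ_succ' q (Nat.lt_succ_iff.mp (mem_range.mp hk)), neg_pow q (k + 1)]
    linear_combination (-1) ^ (k + 1) * qBinomial q n k * hq
  rw [qBinomialSum, sum_range_succ', sum_congr rfl hterm, sum_add_distrib, ← mul_sum, hshift]
  simp only [qBinomialSum, pow_zero, one_mul, qBinomial_zero_right]
  ring

theorem qBinomialSum_neg_one_add_two (n : ℕ) :
    qBinomialSum q (-1) (n + 2) = (1 - q ^ (n + 1)) * qBinomialSum q (-1) n := by
  have h₁ := qBinomialSum_succ q (-1) (n + 1)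
  have h₂ := qBinomialSum_succ q (-1) n
  have h₃ := qBinomialSum_neg_self_succ q n
  rw [mul_neg_one] at h₁ h₂
  linear_combination h₁ - h₂ + h₃

theorem qBinomialSum_neg_one_two_mul (m : ℕ) :
    qBinomialSum q (-1) (2 * m) = ∏ k ∈ range m, (1 - q ^ (2 * k + 1)) := by
  induction m with
  | zero => simp [qBinomialSum]
  | succ m ih => rw [mul_add_one, qBinomialSum_neg_one_add_two, ih, prod_range_succ, mul_comm]

end QBinomial

theorem IsPrimitiveRoot.qBinomial_mul_pow_choose {R : Type*} [CommRing R] [IsDomain R] {ζ : R}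
    {n k : ℕ} (hζ : IsPrimitiveRoot ζ (n + 1)) (hk : k ≤ n) :
    qBinomial ζ n k * ζ ^ (k + 1).choose 2 = (-1) ^ k := by
  induction k with
  | zero => simp
  | succ k ih =>
    have E := one_sub_pow_mul_qBinomial ζ (n - k) k
    rw [Nat.sub_add_cancel (by omega)] at E
    have hone : ζ ^ (n - k) * ζ ^ (k + 1) = 1 := by
      rw [← pow_add, show n - k + (k + 1) = n + 1 by omega, hζ.pow_eq_one]
    have hne : ζ ^ (k + 1) - 1 ≠ 0 :=
      sub_ne_zero.mpr (hζ.pow_ne_one_of_pos_of_lt (by omega) (by omega))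
    have step : qBinomial ζ n k + ζ ^ (k + 1) * qBinomial ζ n (k + 1) = 0 := by
      refine (mul_eq_zero.mp ?_).resolve_left hne
      linear_combination ζ ^ (k + 1) * E + qBinomial ζ n k * hone
    rw [Nat.choose_succ_succ' (k + 1), Nat.choose_one_right, pow_add, pow_succ (-1 : R)]
    linear_combination ζ ^ (k + 1).choose 2 * step - ih (by omega)

theorem IsPrimitiveRoot.prod_one_sub_pow_two_mul_add_one_eq_sum {K : Type*} [Field K] {ρ : K}
    {m : ℕ} (hρ : IsPrimitiveRoot ρ (2 * m + 1)) :
    ∏ k ∈ range m, (1 - ρ ^ (2 * k + 1)) =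
      ∑ k ∈ range (2 * m + 1), (ρ ^ (k + 1).choose 2)⁻¹ := by
  rw [← qBinomialSum_neg_one_two_mul, qBinomialSum]
  refine sum_congr rfl fun k hk ↦ eq_inv_of_mul_eq_one_left ?_
  rw [mul_assoc, hρ.qBinomial_mul_pow_choose (Nat.lt_succ_iff.mp (mem_range.mp hk)), ← mul_pow]
  simp

theorem ZMod.sum_range_natCast {M : Type*} [AddCommMonoid M] (n : ℕ) [NeZero n]
    (f : ZMod n → M) : ∑ k ∈ range n, f k = ∑ a, f a :=
  sum_nbij' (↑) ZMod.val (by simp) (by simp [ZMod.val_lt])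
    (fun k hk ↦ ZMod.val_cast_of_lt (mem_range.mp hk)) (by simp) (by simp)

theorem prod_Icc_one_sub_pow_eq_prod_range {R : Type*} [CommRing R] {ζ : R} {M : ℕ}
    (hζ : ζ ^ (2 * M + 1) = 1) :
    ∏ j ∈ Icc 1 M, (1 - ζ ^ j) = ∏ k ∈ range M, (1 - (ζ ^ M) ^ (2 * k + 1)) := by
  refine prod_nbij' (fun j ↦ M - j) (fun k ↦ M - k) ?_ ?_ ?_ ?_ ?_ <;> intro j hj <;>
    simp only [mem_Icc, mem_range] at hj ⊢
  any_goals omega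
  obtain ⟨d, rfl⟩ := Nat.exists_eq_add_of_le hj.2
  have hexp : (j + d) * (2 * d + 1) = j + (2 * (j + d) + 1) * d := by ring
  rw [Nat.add_sub_cancel_left, ← pow_mul, hexp, pow_add, pow_mul, hζ, one_pow, mul_one]

theorem sq_sub_mul_eq_sq_of_two_mul_add_one_eq_zero {R : Type*} [CommRing R] {M L c k : R}
    (hM : 2 * M + 1 = 0) (hL : 2 * L = M) (hc : (k + 1) * k = c * 2) :
    L ^ 2 - M * c = ((M + 1) * (k + M + 1)) ^ 2 := by
  have hL' : L = -(M + 1) ^ 2 := by linear_combination (M + 1) * hL + (M + 1 - L) * hM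
  have hc' : c = (M + 1) * (k + 1) * k := by linear_combination -(M + 1) * hc - c * hM
  rw [hL', hc']
  linear_combination -(M + 1) * k * (M + k + 2) * hM

theorem IsPrimitiveRoot.sum_pow_sq {K : Type*} [Field K] {ζ : K} {M : ℕ}
    (hζ : IsPrimitiveRoot ζ (2 * M + 1)) {L : ℤ} (hL : 2 * L ≡ M [ZMOD (2 * M + 1 : ℕ)]) :
    ∑ j ∈ range (2 * M + 1), ζ ^ (j ^ 2) = ζ ^ (L ^ 2) * ∏ j ∈ Icc 1 M, (1 - ζ ^ j) := by
  set N := 2 * M + 1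
  let ψ := AddChar.zmodChar N hζ.pow_eq_one
  have hψ (a : ℕ) : ψ a = ζ ^ a := AddChar.zmodChar_apply' _ a
  have hN : (2 * M + 1 : ZMod N) = 0 := by exact_mod_cast ZMod.natCast_self N
  have hL2 : 2 * (L : ZMod N) = M := by exact_mod_cast (ZMod.intCast_eq_intCast_iff _ _ _).mpr hL
  have hterm (k : ℕ) :
      ζ ^ (L ^ 2) * ((ζ ^ M) ^ (k + 1).choose 2)⁻¹ = ψ (((M + 1) * (k + M + 1)) ^ 2) := by
    have hc := congrArg (Nat.cast : ℕ → ZMod N) (Nat.add_one_mul_choose_eq k 1)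
    push_cast [Nat.choose_one_right] at hc
    have hψ1 : ψ 1 = ζ := by simpa using hψ 1
    rw [← pow_mul, ← hψ, ← AddChar.map_neg_eq_inv, ← hψ1, ← AddChar.map_zsmul_eq_zpow,
      ← AddChar.map_add_eq_mul, ← sq_sub_mul_eq_sq_of_two_mul_add_one_eq_zero hN hL2 hc]
    push_cast [zsmul_eq_mul]
    congr 1
    ring
  have hbij : Function.Bijective fun a : ZMod N ↦ (M + 1) * (a + M + 1) :=
    Finite.injective_iff_bijective.mp fun a b hab ↦ by
      linear_combination 2 * hab - (a - b) * hN
  rw [prod_Icc_one_sub_pow_eq_prod_range hζ.pow_eq_one,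
    (hζ.pow_of_coprime M (by simp [N])).prod_one_sub_pow_two_mul_add_one_eq_sum, mul_sum,
    sum_congr rfl fun k _ ↦ hterm k, sum_congr rfl fun j _ ↦ (hψ (j ^ 2)).symm]
  push_cast
  rw [ZMod.sum_range_natCast N (fun a ↦ ψ (a ^ 2)),
    ZMod.sum_range_natCast N (fun a ↦ ψ (((M + 1) * (a + M + 1)) ^ 2))]
  exact (Fintype.sum_bijective _ hbij _ _ fun _ ↦ rfl).symm

/-- For odd `N = 2M+1` and `q = e^{2πi/N}`:
`∑_{j=0}^{N-1} q^{j²} = q^{L²} ∏_{j=1}^{M}(1-q^j)` where `2L ≡ M (mod N)`. -/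
theorem gauss_sum_odd (M N : ℕ) (hN : N = 2 * M + 1)
    (q : ℂ) (hq : q = Complex.exp (2 * Real.pi * Complex.I / N))
    (L : ℤ) (hL : 2 * L ≡ (M : ℤ) [ZMOD (N : ℤ)]) :
    ∑ j ∈ Finset.range N, q ^ (j ^ 2) =
      q ^ (L ^ 2) * ∏ j ∈ Finset.Icc 1 M, (1 - q ^ j) := by
  subst hN hq
  exact (Complex.isPrimitiveRoot_exp _ (by omega)).sum_pow_sq hL
end

section
/- Let N = 2M+1 be odd, q^{1/2} = -e^{πi/N} (so q = e^{2πi/N}), and s a nonnegative integer with s < N/2. Then ∏_{j=1}^{s} (1 - q^{1-2j})/(1 + q^{M-s+2j}) = q^{-s(s+1)/4} · ∏_{j=0}^{s-1} (1 - q^{M-j}), where q^{1/4} is a fixed fourth root compatible with q^{1/2}. -/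
/-!
Write `w = q^{1/2}`. Since `w^N = 1` with `N = 2M + 1`, we have `w^{2M} = w⁻¹`, so each
numerator `1 - w^{-(4j+2)}` splits as `(1 - w^{-(2j+1)}) (1 + w^{-(2j+1)})` and the first
factors are exactly the right-hand product. What remains is
`∏_{j<s} (1 + w^{-(2j+1)}) = w^{-s(s+1)/2} ∏_{j<s} (1 + w^{2s-1-4j})` (the denominators, up to
reversing the order). The exponents `2s-1-4j` for `s+1` are `2s+1` together with the negatives
of those for `s`, and `1 + w^{-e} = w^{-e} (1 + w^e)`, so this follows by induction on `s`.
The denominators never vanish: `w^k = -1` would force `(-1)^N = 1` with `N` odd.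
-/

open Finset

theorem zpow_eq_zpow_of_dvd_sub {G₀ : Type*} [GroupWithZero G₀] {w : G₀} (hw : w ≠ 0) {N : ℕ}
    (hwN : w ^ N = 1) {a b : ℤ} (h : (N : ℤ) ∣ a - b) : w ^ a = w ^ b := by
  obtain ⟨k, hk⟩ := h
  rw [show a = b + N * k by omega, zpow_add₀ hw, zpow_mul, zpow_natCast, hwN, one_zpow, mul_one]

section

variable {K : Type*} [Field K]

theorem prod_zpow_eq_zpow_sum {ι : Type*} {w : K} (hw : w ≠ 0) (S : Finset ι) (e : ι → ℤ) :
    ∏ i ∈ S, w ^ e i = w ^ ∑ i ∈ S, e i := by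
  classical
  induction S using Finset.induction with
  | empty => simp
  | insert i S hi ih => rw [prod_insert hi, sum_insert hi, zpow_add₀ hw, ih]

theorem prod_one_add_zpow_neg {ι : Type*} {w : K} (hw : w ≠ 0) (S : Finset ι) (e : ι → ℤ) :
    ∏ i ∈ S, (1 + w ^ (-e i)) = w ^ (-∑ i ∈ S, e i) * ∏ i ∈ S, (1 + w ^ e i) := by
  have h : ∀ i ∈ S, 1 + w ^ (-e i) = w ^ (-e i) * (1 + w ^ e i) := fun i _ => by
    rw [mul_add, mul_one, ← zpow_add₀ hw, neg_add_cancel, zpow_zero, add_comm]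
  rw [prod_congr rfl h, prod_mul_distrib, prod_zpow_eq_zpow_sum hw, sum_neg_distrib]

theorem sum_range_four_mul_add_three_sub (s : ℕ) :
    ∑ j ∈ range s, (4 * j + 3 - 2 * s : ℤ) = s := by
  have h : ∀ n : ℕ, ∑ j ∈ range n, (4 * j + 3 : ℤ) = 2 * n * n + n := fun n => by
    induction n with
    | zero => simp
    | succ n ih => rw [sum_range_succ, ih]; push_cast; ring
  rw [sum_sub_distrib, h]
  simp only [sum_const, card_range, nsmul_eq_mul]
  ring

theorem prod_range_four_mul_add_three_sub_reflect {M : Type*} [CommMonoid M] (f : ℤ → M)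
    (s : ℕ) :
    ∏ j ∈ range s, f (4 * j + 3 - 2 * s) = ∏ j ∈ range s, f (2 * s - 1 - 4 * j) := by
  rw [← prod_range_reflect]
  refine prod_congr rfl fun j hj => congrArg f ?_
  have : j < s := mem_range.mp hj
  push_cast [Nat.sub_sub, Nat.cast_sub (by omega : 1 + j ≤ s)]
  ring

theorem prod_range_succ_one_add_zpow_odd {w : K} (hw : w ≠ 0) (s : ℕ) :
    ∏ j ∈ range (s + 1), (1 + w ^ (2 * (s + 1 : ℕ) - 1 - 4 * j : ℤ)) =
      (1 + w ^ (2 * s + 1 : ℤ)) * w ^ (-s : ℤ) *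
        ∏ j ∈ range s, (1 + w ^ (2 * s - 1 - 4 * j : ℤ)) := by
  have h : ∀ j ∈ range s, 1 + w ^ (2 * (s + 1 : ℕ) - 1 - 4 * (j + 1 : ℕ) : ℤ) =
      1 + w ^ (-(4 * j + 3 - 2 * s) : ℤ) := fun j _ => by push_cast; ring_nf
  rw [prod_range_succ', prod_congr rfl h, prod_one_add_zpow_neg hw,
    sum_range_four_mul_add_three_sub,
    prod_range_four_mul_add_three_sub_reflect (fun k => 1 + w ^ k)]
  push_cast
  ring_nf

theorem pow_mul_prod_one_add_zpow_neg_odd {v w : K} (hw : w ≠ 0) (hv : v ^ 2 = w) (s : ℕ) :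
    v ^ (s * (s + 1)) * ∏ j ∈ range s, (1 + w ^ (-(2 * j + 1) : ℤ)) =
      ∏ j ∈ range s, (1 + w ^ (2 * s - 1 - 4 * j : ℤ)) := by
  induction s with
  | zero => simp
  | succ s ih =>
    have hvpow : v ^ ((s + 1) * (s + 1 + 1)) = v ^ (s * (s + 1)) * w ^ (s + 1 : ℤ) := by
      rw [← Nat.cast_add_one, zpow_natCast, ← hv, ← pow_mul, ← pow_add]; ring_nf
    have key : w ^ (s + 1 : ℤ) * (1 + w ^ (-(2 * s + 1) : ℤ)) =
        (1 + w ^ (2 * s + 1 : ℤ)) * w ^ (-s : ℤ) := by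
      simp only [mul_add, add_mul, mul_one, one_mul, ← zpow_add₀ hw]
      ring_nf
    rw [prod_range_succ_one_add_zpow_odd hw, ← ih, hvpow, prod_range_succ]
    linear_combination (v ^ (s * (s + 1)) * ∏ j ∈ range s, (1 + w ^ (-(2 * j + 1) : ℤ))) * key

theorem one_add_zpow_ne_zero_of_pow_eq_one {w : K} {N : ℕ} (hwN : w ^ N = 1) (hN : Odd N)
    (hK : (-1 : K) ≠ 1) (k : ℤ) : 1 + w ^ k ≠ 0 := by
  intro h
  have hk : w ^ k = -1 := eq_neg_of_add_eq_zero_right h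
  apply hK
  calc (-1 : K) = (w ^ k) ^ N := by rw [hk, hN.neg_one_pow]
    _ = (w ^ N) ^ k := by rw [← zpow_natCast, ← zpow_natCast, ← zpow_mul, ← zpow_mul, mul_comm]
    _ = 1 := by rw [hwN, one_zpow]

theorem shhide_identity_of_pow_eq_one {v w : K} {M N : ℕ} (s : ℕ) (hN : N = 2 * M + 1)
    (hwN : w ^ N = 1) (hK : (-1 : K) ≠ 1) (hv : v ^ 2 = w) :
    ∏ j ∈ Icc 1 s, (1 - w ^ ((2 : ℤ) - 4 * j)) / (1 + w ^ (2 * ((M : ℤ) - s + 2 * j))) =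
      v ^ (-((s : ℤ) * (s + 1))) * ∏ j ∈ range s, (1 - w ^ (2 * ((M : ℤ) - j))) := by
  have hw : w ≠ 0 := by rintro rfl; simp [hN] at hwN
  have hv0 : v ≠ 0 := by rintro rfl; simp [← hv] at hw
  have hshift : ∀ k : ℤ, w ^ (2 * (M + k)) = w ^ (2 * k - 1) := fun k =>
    zpow_eq_zpow_of_dvd_sub hw hwN ⟨1, by rw [hN]; push_cast; ring⟩
  have hnum : ∀ j : ℕ, 1 - w ^ ((2 : ℤ) - 4 * (1 + j : ℕ)) =
      (1 - w ^ (-(2 * j + 1) : ℤ)) * (1 + w ^ (-(2 * j + 1) : ℤ)) := fun j => by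
    have hsq : w ^ ((2 : ℤ) - 4 * (1 + j : ℕ)) = (w ^ (-(2 * j + 1) : ℤ)) ^ 2 := by
      rw [← zpow_natCast, ← zpow_mul]; push_cast; ring_nf
    rw [hsq]; ring
  have hden : ∀ j : ℕ, 1 + w ^ (2 * ((M : ℤ) - s + 2 * (1 + j : ℕ))) =
      1 + w ^ (4 * j + 3 - 2 * s : ℤ) := fun j => by
    rw [show 2 * ((M : ℤ) - s + 2 * (1 + j : ℕ)) = 2 * (M + (2 * j + 2 - s)) by push_cast; ring,
      hshift]
    ring_nf
  have hrhs : ∀ j : ℕ, 1 - w ^ (2 * ((M : ℤ) - j)) = 1 - w ^ (-(2 * j + 1) : ℤ) := fun j => by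
    rw [show 2 * ((M : ℤ) - j) = 2 * (M + -j) by ring, hshift]; ring_nf
  have hvpow : v ^ (-((s : ℤ) * (s + 1))) = (v ^ (s * (s + 1)))⁻¹ := by
    rw [zpow_neg, ← zpow_natCast]; push_cast; rfl
  have hD : ∏ j ∈ range s, (1 + w ^ (4 * j + 3 - 2 * s : ℤ)) ≠ 0 :=
    prod_ne_zero_iff.mpr fun j _ => one_add_zpow_ne_zero_of_pow_eq_one hwN ⟨M, hN⟩ hK _
  rw [← Ico_add_one_right_eq_Icc, prod_Ico_eq_prod_range, add_tsub_cancel_right]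
  simp only [hnum, hden, hrhs, prod_div_distrib, prod_mul_distrib]
  rw [div_eq_iff hD, prod_range_four_mul_add_three_sub_reflect (fun k => 1 + w ^ k),
    ← pow_mul_prod_one_add_zpow_neg_odd hw hv, hvpow]
  field_simp

end

theorem neg_exp_pi_mul_I_div_pow_eq_one {N : ℕ} (hN : Odd N) :
    (-Complex.exp (Real.pi * Complex.I / N)) ^ N = 1 := by
  rw [neg_pow, hN.neg_one_pow, ← Complex.exp_nat_mul,
    mul_div_cancel₀ _ (Nat.cast_ne_zero.mpr hN.pos.ne'), Complex.exp_pi_mul_I]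
  norm_num

theorem shhide_identity_general (M s N : ℕ) (hN : N = 2 * M + 1)
    (q2 v : ℂ) (hq2 : q2 = -Complex.exp (Real.pi * Complex.I / N))
    (hv : v ^ 2 = q2) :
    ∏ j ∈ Finset.Icc 1 s,
        (1 - q2 ^ ((2 : ℤ) - 4 * j)) / (1 + q2 ^ (2 * ((M : ℤ) - s + 2 * j))) =
    v ^ (-((s : ℤ) * (s + 1))) *
      ∏ j ∈ Finset.range s, (1 - q2 ^ (2 * ((M : ℤ) - j))) :=
  shhide_identity_of_pow_eq_one s hN (hq2 ▸ neg_exp_pi_mul_I_div_pow_eq_one ⟨M, hN⟩)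
    (by norm_num) hv

/-- Identity (shhide): for odd `N = 2M+1`, `q^{1/2} = -e^{πi/N}`, `q^{1/4} = v`
with `v² = q^{1/2}`, and `0 ≤ s < N/2`:
`∏_{j=1}^{s}(1-q^{1-2j})/(1+q^{M-s+2j}) = q^{-s(s+1)/4}·∏_{j=0}^{s-1}(1-q^{M-j})`. -/
theorem shhide_identity (M s N : ℕ) (hN : N = 2 * M + 1) (hs : 2 * s < N)
    (q2 v : ℂ) (hq2 : q2 = -Complex.exp (Real.pi * Complex.I / N))
    (hv : v ^ 2 = q2) :
    ∏ j ∈ Finset.Icc 1 s,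
        (1 - q2 ^ ((2 : ℤ) - 4 * j)) / (1 + q2 ^ (2 * ((M : ℤ) - s + 2 * j))) =
    v ^ (-((s : ℤ) * (s + 1))) *
      ∏ j ∈ Finset.range s, (1 - q2 ^ (2 * ((M : ℤ) - j))) :=
  shhide_identity_general M s N hN q2 v hq2 hv
end
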